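/- Let $R$ be a commutative ring, $\Delta$ an $R$-algebra, $x \in \Delta$ a central element, and $\Delta_l(x) \subseteq M_l(\Delta)$ the subring of $l \times l$ matrices $(a_{ij})$ with $a_{ij} \in x\Delta$ whenever $i > j$. Let $\tilde{x} \in M_l(\Delta)$ be the matrix with $1$ in positions $(i, i+1)$ for $1 \leq i \leq l-1$, with $x$ in position $(l,1)$, and $0$ elsewhere. Then $\tilde{x} \in \Delta_l(x)$, $\tilde{x}^l = x \cdot I_l$, and $\tilde{x} \Delta_l(x) = \Delta_l(x) \tilde{x}$ (i.e. $\tilde{x}$ is a normal element of $\Delta_l(x)$). -/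
import Mathlib

namespace Stmt4Aux

variable {Δ : Type} [Ring Δ]

/-- The matrix with `1` on the superdiagonal, `x` in the bottom-left corner, `0` elsewhere. -/
def xmat (x : Δ) (l : ℕ) : Matrix (Fin l) (Fin l) Δ :=
  Matrix.of fun i j : Fin l =>
    if (j : ℕ) = (i : ℕ) + 1 then (1 : Δ)
    else if (i : ℕ) = l - 1 ∧ (j : ℕ) = 0 then x else 0

lemma mul_xmat {x : Δ} {l : ℕ} (a : Matrix (Fin l) (Fin l) Δ)
    (i j : Fin l) :
    (a * xmat x l) i j =
      if (j : ℕ) = 0 then a i ⟨l - 1, Nat.sub_lt j.pos Nat.one_pos⟩ * x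
      else a i ⟨(j : ℕ) - 1, Nat.lt_of_le_of_lt (Nat.sub_le _ _) j.isLt⟩ := by
  have hl : 0 < l := j.pos
  rw [Matrix.mul_apply]
  split_ifs with hj
  · rw [Finset.sum_eq_single (⟨l - 1, Nat.sub_lt j.pos Nat.one_pos⟩ : Fin l)]
    · have h1 : ¬((j : ℕ) = l - 1 + 1) := by omega
      simp [xmat, h1, hj]
    · intro m _ hm
      have hm' : (m : ℕ) ≠ l - 1 := fun h => hm (Fin.ext h)
      have h1 : ¬((j : ℕ) = (m : ℕ) + 1) := by omega
      simp [xmat, h1, hm']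
    · simp
  · have hjl : (j : ℕ) - 1 < l := Nat.lt_of_le_of_lt (Nat.sub_le _ _) j.isLt
    rw [Finset.sum_eq_single (⟨(j : ℕ) - 1, hjl⟩ : Fin l)]
    · have h1 : (j : ℕ) = (j : ℕ) - 1 + 1 := by omega
      simp only [xmat, Matrix.of_apply, Fin.val_mk]
      rw [if_pos h1, mul_one]
    · intro m _ hm
      have hm' : (m : ℕ) ≠ (j : ℕ) - 1 := fun h => hm (Fin.ext h)
      have h1 : ¬((j : ℕ) = (m : ℕ) + 1) := by omega
      simp [xmat, h1, hj]
    · simp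

lemma xmat_mul {x : Δ} {l : ℕ} (a : Matrix (Fin l) (Fin l) Δ)
    (i j : Fin l) :
    (xmat x l * a) i j =
      if h : (i : ℕ) = l - 1 then x * a ⟨0, i.pos⟩ j
      else a ⟨(i : ℕ) + 1, by have := i.isLt; omega⟩ j := by
  have hl : 0 < l := i.pos
  have hil := i.isLt
  rw [Matrix.mul_apply]
  split_ifs with hi
  · rw [Finset.sum_eq_single (⟨0, hl⟩ : Fin l)]
    · have h1 : ¬((0 : ℕ) = (i : ℕ) + 1) := by omega
      simp [xmat, h1, hi]
    · intro m _ hm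
      have hm' : (m : ℕ) ≠ 0 := fun h => hm (Fin.ext h)
      have h1 : ¬((m : ℕ) = (i : ℕ) + 1) := by omega
      simp [xmat, h1, hm']
    · simp
  · have hi' : (i : ℕ) + 1 < l := by omega
    rw [Finset.sum_eq_single (⟨(i : ℕ) + 1, hi'⟩ : Fin l)]
    · simp [xmat]
    · intro m _ hm
      have hm' : (m : ℕ) ≠ (i : ℕ) + 1 := fun h => hm (Fin.ext h)
      simp [xmat, hm', hi]
    · simp

lemma xmat_pow {x : Δ} {l : ℕ} (hl : 0 < l) :
    ∀ k, k ≤ l → ∀ i j : Fin l,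
      ((xmat x l) ^ k) i j =
        if (j : ℕ) = (i : ℕ) + k then 1
        else if (j : ℕ) + l = (i : ℕ) + k then x else 0 := by
  intro k
  induction k with
  | zero =>
    intro _ i j
    have hj := j.isLt
    rw [pow_zero]
    simp only [Matrix.one_apply, Fin.ext_iff, Nat.add_zero]
    split_ifs <;> first | rfl | omega
  | succ k ih =>
    intro hk i j
    have hi := i.isLt
    have hj := j.isLt
    rw [pow_succ, mul_xmat]
    by_cases hj0 : (j : ℕ) = 0
    · rw [if_pos hj0, ih (by omega) i ⟨l - 1, Nat.sub_lt j.pos Nat.one_pos⟩]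
      simp only [Fin.val_mk]
      split_ifs <;> first | omega | simp
    · rw [if_neg hj0,
        ih (by omega) i ⟨(j : ℕ) - 1, Nat.lt_of_le_of_lt (Nat.sub_le _ _) j.isLt⟩]
      simp only [Fin.val_mk]
      split_ifs <;> first | rfl | omega

end Stmt4Aux

open Stmt4Aux in
/-- For a central element `x` of an `R`-algebra `Δ`, the matrix `x̃` with `1` on
the superdiagonal, `x` in the bottom-left corner and `0` elsewhere lies in
`Δ_l(x) ⊆ M_l(Δ)` (the matrices which are in `xΔ` below the diagonal), satisfies
`x̃ ^ l = x • 1` and is a normal element of `Δ_l(x)`. -/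
theorem stmt_4 (R : Type) [CommRing R] (Δ : Type) [Ring Δ] [Algebra R Δ]
    (x : Δ) (hx : x ∈ Subring.center Δ)
    (l : ℕ) (hl : 0 < l)
    (S : Set (Matrix (Fin l) (Fin l) Δ))
    (hS : S = {a : Matrix (Fin l) (Fin l) Δ |
      ∀ i j : Fin l, (j : ℕ) < (i : ℕ) → ∃ c : Δ, a i j = x * c})
    (xt : Matrix (Fin l) (Fin l) Δ)
    (hxt : xt = Matrix.of fun i j : Fin l =>
      if (j : ℕ) = (i : ℕ) + 1 then (1 : Δ)
      else if (i : ℕ) = l - 1 ∧ (j : ℕ) = 0 then x else 0) :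
    xt ∈ S ∧
    xt ^ l = x • (1 : Matrix (Fin l) (Fin l) Δ) ∧
    (∀ a ∈ S, ∃ b ∈ S, xt * a = b * xt) ∧
    (∀ a ∈ S, ∃ b ∈ S, a * xt = xt * b) := by
  have hcomm : ∀ c : Δ, c * x = x * c := fun c => Subring.mem_center_iff.mp hx c
  subst hS
  have hxt' : xt = xmat x l := hxt
  subst hxt'
  clear hxt
  refine ⟨?_, ?_, ?_, ?_⟩
  -- Part 1 : xt ∈ S
  · intro i j hij
    have hne : ¬((j : ℕ) = (i : ℕ) + 1) := by omega
    by_cases h : (i : ℕ) = l - 1 ∧ (j : ℕ) = 0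
    · exact ⟨1, by simp [xmat, hne, h.1, h.2]⟩
    · exact ⟨0, by simp [xmat, hne, h]⟩
  -- Part 2 : xt ^ l = x • 1
  · ext i j
    rw [xmat_pow hl l le_rfl i j]
    have hi := i.isLt
    have hj := j.isLt
    simp only [Matrix.smul_apply, Matrix.one_apply, smul_eq_mul]
    by_cases hij : i = j
    · subst hij
      rw [if_neg (by omega), if_pos (by omega), if_pos rfl, mul_one]
    · have hij' : (j : ℕ) ≠ (i : ℕ) := fun h => hij (Fin.ext h.symm)
      rw [if_neg (by omega), if_neg (by omega), if_neg hij, mul_zero]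
  -- Part 3 : xt * a = b * xt
  · intro a ha
    have key : ∀ i : Fin l, ∃ c, (xmat x l * a) i ⟨0, hl⟩ = x * c := by
      intro i
      rw [xmat_mul]
      split_ifs with h
      · exact ⟨a ⟨0, hl⟩ ⟨0, hl⟩, rfl⟩
      · exact ha _ _ (Nat.succ_pos _)
    choose c hc using key
    refine ⟨Matrix.of fun i j : Fin l =>
      if h : (j : ℕ) = l - 1 then c i
      else (xmat x l * a) i ⟨(j : ℕ) + 1, by have := j.isLt; omega⟩, ?_, ?_⟩
    · -- b ∈ S
      intro i j hij
      have hi := i.isLt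
      have hjne : ¬((j : ℕ) = l - 1) := by omega
      simp only [Matrix.of_apply, dif_neg hjne]
      rw [xmat_mul]
      split_ifs with h
      · exact ⟨a ⟨0, hl⟩ ⟨(j : ℕ) + 1, by have := j.isLt; omega⟩, rfl⟩
      · exact ha _ _ (show (j : ℕ) + 1 < (i : ℕ) + 1 by omega)
    · -- xt * a = b * xt
      symm
      ext i j
      rw [mul_xmat]
      have hj := j.isLt
      split_ifs with hj0
      · have hc' : ((⟨l - 1, Nat.sub_lt j.pos Nat.one_pos⟩ : Fin l) : ℕ) = l - 1 := rfl
        simp only [Matrix.of_apply]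
        rw [dif_pos (by first | trivial | exact hc')]
        have hj' : j = ⟨0, hl⟩ := Fin.ext hj0
        subst hj'
        rw [hcomm, hc]
      · have hne : ¬(((⟨(j : ℕ) - 1, Nat.lt_of_le_of_lt (Nat.sub_le _ _) j.isLt⟩ : Fin l) : ℕ) = l - 1) := by
          simp only [Fin.val_mk]; omega
        simp only [Matrix.of_apply]
        rw [dif_neg hne]
        have hj' : (⟨(((⟨(j : ℕ) - 1, Nat.lt_of_le_of_lt (Nat.sub_le _ _) j.isLt⟩ : Fin l)) : ℕ) + 1,
            by have := j.isLt; omega⟩ : Fin l) = j :=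
          Fin.ext (show (j : ℕ) - 1 + 1 = (j : ℕ) by omega)
        rw [hj']
  -- Part 4 : a * xt = xt * b
  · intro a ha
    have key : ∀ j : Fin l, ∃ c, (a * xmat x l) ⟨l - 1, Nat.sub_lt hl Nat.one_pos⟩ j = x * c := by
      intro j
      have hj := j.isLt
      rw [mul_xmat]
      split_ifs with h
      · exact ⟨a ⟨l - 1, Nat.sub_lt hl Nat.one_pos⟩ ⟨l - 1, Nat.sub_lt hl Nat.one_pos⟩,
          hcomm _⟩
      · exact ha _ _ (show (j : ℕ) - 1 < l - 1 by omega)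
    choose c hc using key
    refine ⟨Matrix.of fun i j : Fin l =>
      if h : (i : ℕ) = 0 then c j
      else (a * xmat x l) ⟨(i : ℕ) - 1, Nat.lt_of_le_of_lt (Nat.sub_le _ _) i.isLt⟩ j, ?_, ?_⟩
    · -- b ∈ S
      intro i j hij
      have hine : ¬((i : ℕ) = 0) := by omega
      simp only [Matrix.of_apply, dif_neg hine]
      rw [mul_xmat]
      split_ifs with h
      · exact ⟨a _ _, hcomm _⟩
      · exact ha _ _ (show (j : ℕ) - 1 < (i : ℕ) - 1 by omega)
    · -- a * xt = xt * b
      symm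
      ext i j
      rw [xmat_mul]
      have hi := i.isLt
      split_ifs with hi0
      · have hc' : ((⟨0, i.pos⟩ : Fin l) : ℕ) = 0 := rfl
        simp only [Matrix.of_apply]
        rw [dif_pos (by first | trivial | exact hc')]
        have hi' : i = (⟨l - 1, Nat.sub_lt hl Nat.one_pos⟩ : Fin l) := Fin.ext hi0
        rw [hi', hc j]
      · have hne : ¬(((⟨(i : ℕ) + 1, by have := i.isLt; omega⟩ : Fin l) : ℕ) = 0) :=
          Nat.succ_ne_zero _
        simp only [Matrix.of_apply]
        rw [dif_neg hne]
        have hi' : (⟨(((⟨(i : ℕ) + 1, by have := i.isLt; omega⟩ : Fin l)) : ℕ) - 1,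
            Nat.lt_of_le_of_lt (Nat.sub_le _ _) (Fin.isLt _)⟩ : Fin l) = i :=
          Fin.ext (show (i : ℕ) + 1 - 1 = (i : ℕ) by omega)
        rw [hi']
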